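/- Let K ⊆ ℝ^d be a compact connected set. Suppose that for every x ∈ K there exists C_x > 0 such that for all f ∈ C¹(K) and all y ∈ K with y ≠ x one has |f(y) − f(x)|/|y − x| ≤ C_x ‖f‖_{C¹(K)}. Then K is pointwise Whitney regular. -/

import Mathlib

/-!
Fix `x ∈ K` with its constant `C`, and `y ∈ K` with `C ‖y - x‖ < 1/2`. For `δ > 0`, the length of
the shortest `δ`-chain from `x` inside the `δ`-thickening of `K`, truncated at a level `T`, is
`1`-Lipschitz at scale `δ`; mollifying it gives `f ∈ C¹(K)` with `‖f‖_{C¹(K)} ≤ T + 1 + O(δ)`,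
`f x ≈ 0` and `f y ≈ min (chain length) T`. For a suitable `T` the hypothesis then bounds the chain
length by `2 C ‖y - x‖ + O(δ)`. Run through at constant speed, these chains are paths that are
`2 C ‖y - x‖`-Lipschitz up to `O(δ)`; by compactness they have a pointwise limit along an
ultrafilter, which is a genuinely Lipschitz path in `K` from `x` to `y`.
-/

open Set Filter Topology MeasureTheory
open scoped NNReal ENNReal

noncomputable section

/-- `df` is a (not necessarily unique) derivative of `f` on the set `K`:
at every `x ∈ K`, `(f y - f x - ⟪df x, y - x⟫)/‖y - x‖ → 0` as `y → x` within `K`. -/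
def IsDerivOn {d : ℕ} (K : Set (EuclideanSpace ℝ (Fin d)))
    (f : EuclideanSpace ℝ (Fin d) → ℝ)
    (df : EuclideanSpace ℝ (Fin d) → EuclideanSpace ℝ (Fin d)) : Prop :=
  ∀ x ∈ K, Filter.Tendsto
    (fun y => (f y - f x - (inner ℝ (df x) (y - x) : ℝ)) / ‖y - x‖)
    (𝓝[K \ {x}] x) (𝓝 0)

/-- Sup norm of a function on `K`. -/
def supNormOn {d : ℕ} {α : Type*} [Norm α] (K : Set (EuclideanSpace ℝ (Fin d)))
    (g : EuclideanSpace ℝ (Fin d) → α) : ℝ :=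
  sSup ((fun z => ‖g z‖) '' K)

/-- `f ∈ C¹(K)`: `f` admits a continuous derivative on `K`. -/
def MemC1 {d : ℕ} (K : Set (EuclideanSpace ℝ (Fin d)))
    (f : EuclideanSpace ℝ (Fin d) → ℝ) : Prop :=
  ∃ df, ContinuousOn df K ∧ IsDerivOn K f df

/-- The quotient norm `‖f‖_{C¹(K)} = ‖f‖_K + inf {‖df‖_K : df a continuous derivative of f}`. -/
def c1Norm {d : ℕ} (K : Set (EuclideanSpace ℝ (Fin d)))
    (f : EuclideanSpace ℝ (Fin d) → ℝ) : ℝ :=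
  supNormOn K f +
    sInf {r | ∃ df, ContinuousOn df K ∧ IsDerivOn K f df ∧ r = supNormOn K df}

/-- `x` and `y` are joined by a rectifiable path inside `S` of length at most `L`. -/
def RectJoin {d : ℕ} (S : Set (EuclideanSpace ℝ (Fin d)))
    (x y : EuclideanSpace ℝ (Fin d)) (L : ℝ) : Prop :=
  ∃ γ : ℝ → EuclideanSpace ℝ (Fin d), ContinuousOn γ (Icc 0 1) ∧
    MapsTo γ (Icc 0 1) S ∧ γ 0 = x ∧ γ 1 = y ∧
    eVariationOn γ (Icc 0 1) ≤ ENNReal.ofReal L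

/-- Pointwise Whitney regularity of a set. -/
def PointwiseWhitneyRegular {d : ℕ} (S : Set (EuclideanSpace ℝ (Fin d))) : Prop :=
  ∀ x ∈ S, ∃ C > (0:ℝ), ∃ V ∈ 𝓝 x, ∀ y ∈ V ∩ S, RectJoin S x y (C * ‖x - y‖)

open Metric

section Chains

variable {X : Type*} [PseudoMetricSpace X] {S : Set X} {ε : ℝ} {x w w' : X} {n : ℕ} {p : ℕ → X}

def IsEpsChain (S : Set X) (ε : ℝ) (x w : X) (n : ℕ) (p : ℕ → X) : Prop :=
  p 0 = x ∧ p n = w ∧ (∀ i ≤ n, p i ∈ S) ∧ ∀ i < n, dist (p i) (p (i + 1)) ≤ ε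

def chainLength (p : ℕ → X) (n : ℕ) : ℝ :=
  ∑ i ∈ Finset.range n, dist (p i) (p (i + 1))

-- `sInf ∅ = 0`: the value is junk unless some `ε`-chain from `x` to `w` exists.
def chainDist (S : Set X) (ε : ℝ) (x w : X) : ℝ :=
  sInf {ℓ | ∃ n p, IsEpsChain S ε x w n p ∧ chainLength p n = ℓ}

lemma chainLength_nonneg (p : ℕ → X) (n : ℕ) : 0 ≤ chainLength p n :=
  Finset.sum_nonneg fun _ _ => dist_nonneg

@[simp]
lemma chainLength_zero (p : ℕ → X) : chainLength p 0 = 0 :=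
  Finset.sum_range_zero _

lemma chainLength_succ (p : ℕ → X) (n : ℕ) :
    chainLength p (n + 1) = chainLength p n + dist (p n) (p (n + 1)) :=
  Finset.sum_range_succ _ _

lemma dist_le_chainLength_sub (p : ℕ → X) {i j : ℕ} (hij : i ≤ j) :
    dist (p i) (p j) ≤ chainLength p j - chainLength p i := by
  induction j, hij using Nat.le_induction with
  | base => simp
  | succ j _ ih =>
    rw [chainLength_succ]
    linarith [dist_triangle (p i) (p j) (p (j + 1))]

lemma chainDist_le (h : IsEpsChain S ε x w n p) : chainDist S ε x w ≤ chainLength p n :=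
  csInf_le ⟨0, by rintro _ ⟨m, q, -, rfl⟩; exact chainLength_nonneg q m⟩ ⟨n, p, h, rfl⟩

lemma chainDist_nonneg : 0 ≤ chainDist S ε x w :=
  Real.sInf_nonneg (by rintro _ ⟨m, q, -, rfl⟩; exact chainLength_nonneg q m)

lemma isEpsChain_refl (hx : x ∈ S) : IsEpsChain S ε x x 0 fun _ => x :=
  ⟨rfl, rfl, fun _ _ => hx, fun _ h => absurd h (Nat.not_lt_zero _)⟩

lemma chainDist_self (hx : x ∈ S) : chainDist S ε x x = 0 :=
  le_antisymm (by simpa [chainLength] using chainDist_le (isEpsChain_refl (ε := ε) hx))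
    chainDist_nonneg

lemma IsEpsChain.snoc (h : IsEpsChain S ε x w n p) (hw' : w' ∈ S) (hstep : dist w w' ≤ ε) :
    IsEpsChain S ε x w' (n + 1) (Function.update p (n + 1) w') ∧
      chainLength (Function.update p (n + 1) w') (n + 1) = chainLength p n + dist w w' := by
  obtain ⟨h0, hn, hS, hsteps⟩ := h
  set q := Function.update p (n + 1) w'
  have hq : ∀ i ≤ n, q i = p i := fun i hi => Function.update_of_ne (by omega) _ _
  have hqn : q (n + 1) = w' := Function.update_self ..
  refine ⟨⟨by rw [hq 0 n.zero_le, h0], hqn, fun i hi => ?_, fun i hi => ?_⟩, ?_⟩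
  · rcases Nat.of_le_succ hi with hi | rfl
    · exact hq i hi ▸ hS i hi
    · exact hqn ▸ hw'
  · rcases Nat.lt_succ_iff_lt_or_eq.1 hi with hi | rfl
    · rw [hq i hi.le, hq (i + 1) hi]
      exact hsteps i hi
    · rwa [hq i le_rfl, hqn, hn]
  · rw [chainLength_succ, hq n le_rfl, hqn, hn]
    congr 1
    exact Finset.sum_congr rfl fun i hi => by
      rw [Finset.mem_range] at hi
      rw [hq i hi.le, hq (i + 1) hi]

lemma exists_isEpsChain_of_isPreconnected {s : Set X} (hs : IsPreconnected s) (hsS : s ⊆ S)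
    (hε : 0 < ε) (hx : x ∈ s) (hw : w ∈ s) : ∃ n p, IsEpsChain S ε x w n p := by
  let P : X → X → Prop := fun u v =>
    (∃ n p, IsEpsChain S ε x u n p) → ∃ n p, IsEpsChain S ε x v n p
  refine hs.induction₂' P (fun u hu => ?_) (fun _ _ _ _ _ _ huv hvw => hvw ∘ huv) hx hw
    ⟨0, _, isEpsChain_refl (hsS hx)⟩
  filter_upwards [mem_nhdsWithin_of_mem_nhds (ball_mem_nhds u hε), self_mem_nhdsWithin]
    with v huv hv
  rw [mem_ball] at huv
  exact ⟨fun ⟨n, p, h⟩ => ⟨n + 1, _, (h.snoc (hsS hv) (by rw [dist_comm]; exact huv.le)).1⟩,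
    fun ⟨n, p, h⟩ => ⟨n + 1, _, (h.snoc (hsS hu) huv.le).1⟩⟩

lemma exists_isEpsChain_thickening {K : Set X} (hK : IsPreconnected K) (hε : 0 < ε) (hx : x ∈ K)
    (hw : w ∈ thickening ε K) : ∃ n p, IsEpsChain (thickening ε K) ε x w n p := by
  obtain ⟨z, hz, hzw⟩ := mem_thickening_iff.1 hw
  obtain ⟨n, p, h⟩ :=
    exists_isEpsChain_of_isPreconnected hK (self_subset_thickening hε K) hε hx hz
  exact ⟨n + 1, _, (h.snoc hw (by rw [dist_comm]; exact hzw.le)).1⟩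

lemma exists_isEpsChain_lt_chainDist_add (hw : ∃ n p, IsEpsChain S ε x w n p) {η : ℝ}
    (hη : 0 < η) : ∃ n p, IsEpsChain S ε x w n p ∧ chainLength p n < chainDist S ε x w + η := by
  obtain ⟨n, p, h⟩ := hw
  obtain ⟨_, ⟨m, q, hq, rfl⟩, hlt⟩ :=
    Real.lt_sInf_add_pos (s := {ℓ | ∃ n p, IsEpsChain S ε x w n p ∧ chainLength p n = ℓ})
      ⟨_, n, p, h, rfl⟩ hη
  exact ⟨m, q, hq, hlt⟩

lemma chainDist_le_chainDist_add (hw : ∃ n p, IsEpsChain S ε x w n p) (hw' : w' ∈ S)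
    (hstep : dist w w' ≤ ε) : chainDist S ε x w' ≤ chainDist S ε x w + dist w w' := by
  obtain ⟨n, p, h⟩ := hw
  rw [← sub_le_iff_le_add]
  refine le_csInf ⟨_, n, p, h, rfl⟩ ?_
  rintro _ ⟨m, q, hq, rfl⟩
  rw [sub_le_iff_le_add, ← (hq.snoc hw' hstep).2]
  exact chainDist_le (hq.snoc hw' hstep).1

lemma lipschitzOnWith_chainDist_thickening {K : Set X} (hK : IsPreconnected K) (hε : 0 < ε)
    (hx : x ∈ K) {r : ℝ} (hr : r ≤ ε / 2) (hball : ball w r ⊆ thickening ε K) :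
    LipschitzOnWith 1 (chainDist (thickening ε K) ε x) (ball w r) := by
  refine LipschitzOnWith.of_le_add fun v hv v' hv' => ?_
  have hvv' : dist v' v ≤ ε := by
    rw [mem_ball] at hv hv'
    linarith [dist_triangle_right v' v w]
  simpa [dist_comm] using chainDist_le_chainDist_add
    (exists_isEpsChain_thickening hK hε hx (hball hv')) (hball hv) hvv'

lemma continuousOn_chainDist_thickening {K : Set X} (hK : IsPreconnected K) (hε : 0 < ε)
    (hx : x ∈ K) : ContinuousOn (chainDist (thickening ε K) ε x) (thickening ε K) := by
  intro w hw
  obtain ⟨ρ, hρ, hball⟩ := isOpen_iff.1 isOpen_thickening w hw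
  have hr : 0 < min ρ (ε / 2) := lt_min hρ (half_pos hε)
  have hlip := lipschitzOnWith_chainDist_thickening hK hε hx (min_le_right _ _)
    ((ball_subset_ball (min_le_left _ _)).trans hball)
  exact (hlip.continuousOn.continuousAt (ball_mem_nhds w hr)).continuousWithinAt

end Chains

section TruncatedChainDist

variable {X : Type*} [PseudoMetricSpace X] {K : Set X} {δ T : ℝ} {x w : X}

def truncChainDist (K : Set X) (δ : ℝ) (x : X) (T : ℝ) : X → ℝ :=
  (thickening δ K).indicator fun w => min (chainDist (thickening δ K) δ x w) T

lemma truncChainDist_of_mem (hw : w ∈ thickening δ K) :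
    truncChainDist K δ x T w = min (chainDist (thickening δ K) δ x w) T :=
  indicator_of_mem hw _

lemma abs_truncChainDist_le (hT : 0 ≤ T) (w : X) : |truncChainDist K δ x T w| ≤ T := by
  by_cases hw : w ∈ thickening δ K
  · rw [truncChainDist_of_mem hw, abs_of_nonneg (le_min chainDist_nonneg hT)]
    exact min_le_right _ _
  · simp [truncChainDist, indicator_of_notMem hw, hT]

lemma lipschitzOnWith_truncChainDist (hK : IsPreconnected K) (hδ : 0 < δ) (hx : x ∈ K) {z : X}
    (hz : z ∈ K) {r : ℝ} (hr : r ≤ δ / 2) :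
    LipschitzOnWith 1 (truncChainDist K δ x T) (ball z r) := by
  have hball : ball z r ⊆ thickening δ K := fun w hw =>
    mem_thickening_iff.2 ⟨z, hz, (mem_ball.1 hw).trans_le (by linarith)⟩
  have hmin := (LipschitzWith.id.min_const T).comp_lipschitzOnWith
    (lipschitzOnWith_chainDist_thickening hK hδ hx hr hball)
  refine LipschitzOnWith.of_dist_le_mul fun w hw w' hw' => ?_
  rw [truncChainDist_of_mem (hball hw), truncChainDist_of_mem (hball hw')]
  simpa using hmin.dist_le_mul w hw w' hw'

lemma locallyIntegrable_truncChainDist [MeasurableSpace X] [OpensMeasurableSpace X]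
    {μ : Measure X} [IsLocallyFiniteMeasure μ] (hK : IsPreconnected K) (hδ : 0 < δ)
    (hx : x ∈ K) (hT : 0 ≤ T) : LocallyIntegrable (truncChainDist K δ x T) μ := by
  classical
  have hmeas : Measurable (truncChainDist K δ x T) := by
    rw [truncChainDist, ← piecewise_eq_indicator]
    exact ((continuous_id.min continuous_const).comp_continuousOn
      (continuousOn_chainDist_thickening hK hδ hx)).measurable_piecewise
      continuousOn_const isOpen_thickening.measurableSet
  refine (locallyIntegrable_const T).mono hmeas.aestronglyMeasurable (ae_of_all _ fun w => ?_)
  simpa [abs_of_nonneg hT] using abs_truncChainDist_le hT w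

end TruncatedChainDist

section Smoothing

open ContinuousLinearMap
open scoped Convolution

variable {E : Type*} [NormedAddCommGroup E] [NormedSpace ℝ E] [FiniteDimensional ℝ E]
  [MeasurableSpace E] [BorelSpace E] {μ : Measure E} [μ.IsAddHaarMeasure] {D : E → ℝ}

lemma ContDiffBump.lipschitzOnWith_normed_convolution (φ : ContDiffBump (0 : E))
    (hD : LocallyIntegrable D μ) {L : ℝ≥0} {z : E} {r : ℝ} (hlip : LipschitzOnWith L D (ball z r)) :
    LipschitzOnWith L (φ.normed μ ⋆[lsmul ℝ ℝ, μ] D) (ball z (r - φ.rOut)) := by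
  refine LipschitzOnWith.of_dist_le_mul fun w₁ h₁ w₂ h₂ => ?_
  have hint : ∀ w, Integrable (fun u => φ.normed μ u * D (w - u)) μ := fun w =>
    (φ.hasCompactSupport_normed.convolutionExists_left (lsmul ℝ ℝ) φ.continuous_normed hD
      w).integrable
  have hbound : ∀ u, ‖φ.normed μ u * D (w₁ - u) - φ.normed μ u * D (w₂ - u)‖ ≤
      φ.normed μ u * (L * dist w₁ w₂) := by
    intro u
    rw [← mul_sub, norm_mul, Real.norm_of_nonneg (φ.nonneg_normed u)]
    by_cases hu : u ∈ ball 0 φ.rOut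
    · have hmem : ∀ w ∈ ball z (r - φ.rOut), w - u ∈ ball z r := fun w hw => by
        rw [mem_ball] at hw ⊢
        rw [mem_ball_zero_iff] at hu
        have : dist (w - u) w = ‖u‖ := by simp
        linarith [dist_triangle (w - u) w z]
      have := hlip.dist_le_mul _ (hmem w₁ h₁) _ (hmem w₂ h₂)
      rw [dist_sub_right, Real.dist_eq] at this
      exact mul_le_mul_of_nonneg_left this (φ.nonneg_normed u)
    · rw [← φ.support_normed_eq (μ := μ), Function.notMem_support] at hu
      simp [hu]
  simp only [dist_eq_norm, convolution_def, lsmul_apply, smul_eq_mul]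
  rw [← integral_sub (hint w₁) (hint w₂)]
  refine (norm_integral_le_of_norm_le (φ.integrable_normed.mul_const _)
    (ae_of_all _ hbound)).trans_eq ?_
  rw [integral_mul_const, φ.integral_normed, one_mul, dist_eq_norm]

lemma exists_contDiff_approx_of_lipschitzOnWith (hD : LocallyIntegrable D μ) {K : Set E}
    {L : ℝ≥0} {r : ℝ} (hr : 0 < r) (hlip : ∀ z ∈ K, LipschitzOnWith L D (ball z r)) :
    ∃ f : E → ℝ, ContDiff ℝ 1 f ∧ ∀ z ∈ K, |f z - D z| ≤ L * r / 2 ∧ ‖fderiv ℝ f z‖ ≤ L := by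
  let φ : ContDiffBump (0 : E) := ⟨r / 4, r / 2, by positivity, by linarith⟩
  refine ⟨φ.normed μ ⋆[lsmul ℝ ℝ, μ] D,
    φ.hasCompactSupport_normed.contDiff_convolution_left _ φ.contDiff_normed hD,
    fun z hz => ⟨?_, ?_⟩⟩
  · rw [← Real.dist_eq]
    refine φ.dist_normed_convolution_le hD.aestronglyMeasurable fun w hw => ?_
    have hw' : dist w z < r / 2 := hw
    calc dist (D w) (D z) ≤ L * dist w z :=
          (hlip z hz).dist_le_mul w (mem_ball.2 (by linarith)) z (mem_ball_self hr)
      _ ≤ L * r / 2 := by rw [mul_div_assoc]; gcongr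
  · exact norm_fderiv_le_of_lipschitzOn ℝ (ball_mem_nhds z (by simp [φ]; linarith))
      (φ.lipschitzOnWith_normed_convolution hD (hlip z hz))

end Smoothing

section C1

variable {d : ℕ} {K : Set (EuclideanSpace ℝ (Fin d))} {f : EuclideanSpace ℝ (Fin d) → ℝ}

lemma isDerivOn_gradient (hf : Differentiable ℝ f) : IsDerivOn K f (gradient f) := by
  intro z _
  refine squeeze_zero_norm (fun y => ?_)
    ((hasGradientAt_iff_tendsto.1 (hf z).hasGradientAt).mono_left nhdsWithin_le_nhds)
  rw [Real.norm_eq_abs, abs_div, abs_norm, div_eq_inv_mul, Real.norm_eq_abs]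

lemma ContDiff.continuous_gradient (hf : ContDiff ℝ 1 f) : Continuous (gradient f) :=
  (InnerProductSpace.toDual ℝ _).symm.continuous.comp (hf.continuous_fderiv one_ne_zero)

lemma memC1_of_contDiff (hf : ContDiff ℝ 1 f) : MemC1 K f :=
  ⟨gradient f, hf.continuous_gradient.continuousOn,
    isDerivOn_gradient (hf.differentiable one_ne_zero)⟩

lemma c1Norm_le_of_contDiff (hf : ContDiff ℝ 1 f) {A B : ℝ} (hA : 0 ≤ A) (hB : 0 ≤ B)
    (hfA : ∀ z ∈ K, |f z| ≤ A) (hfB : ∀ z ∈ K, ‖fderiv ℝ f z‖ ≤ B) : c1Norm K f ≤ A + B := by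
  have hsup : supNormOn K f ≤ A := Real.sSup_le (by rintro _ ⟨z, hz, rfl⟩; exact hfA z hz) hA
  have hgrad : supNormOn K (gradient f) ≤ B := Real.sSup_le (by
    rintro _ ⟨z, hz, rfl⟩
    simpa [gradient] using hfB z hz) hB
  have hbdd : BddBelow {r | ∃ df, ContinuousOn df K ∧ IsDerivOn K f df ∧ r = supNormOn K df} :=
    ⟨0, by
      rintro _ ⟨df, -, -, rfl⟩
      exact Real.sSup_nonneg (by rintro _ ⟨z, -, rfl⟩; exact norm_nonneg _)⟩
  have hinf := (csInf_le hbdd ⟨gradient f, hf.continuous_gradient.continuousOn,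
    isDerivOn_gradient (hf.differentiable one_ne_zero), rfl⟩).trans hgrad
  exact add_le_add hsup hinf

end C1

section Paths

variable {X : Type*} [MetricSpace X]

-- The chain parametrised on `[0, 1]` by normalised arclength, as a step function.
def stepPath (p : ℕ → X) (n : ℕ) (t : ℝ) : X :=
  p (Nat.findGreatest (fun i => chainLength p i ≤ t * chainLength p n) n)

variable {p : ℕ → X} {n : ℕ}

lemma chainLength_findGreatest_le (p : ℕ → X) (n : ℕ) {c : ℝ} (hc : 0 ≤ c) :
    chainLength p (Nat.findGreatest (fun i => chainLength p i ≤ c) n) ≤ c :=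
  Nat.findGreatest_spec (P := fun i => chainLength p i ≤ c) n.zero_le (by simpa using hc)

lemma stepPath_zero (p : ℕ → X) (n : ℕ) : stepPath p n 0 = p 0 := by
  have h := dist_le_chainLength_sub p (Nat.zero_le
    (Nat.findGreatest (fun i => chainLength p i ≤ 0 * chainLength p n) n))
  rw [chainLength_zero, sub_zero] at h
  have hi := chainLength_findGreatest_le p n (zero_mul (chainLength p n)).ge
  exact (dist_le_zero.1 (h.trans (hi.trans_eq (zero_mul _)))).symm

lemma stepPath_one (p : ℕ → X) (n : ℕ) : stepPath p n 1 = p n := by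
  rw [stepPath, le_antisymm (Nat.findGreatest_le n) (Nat.le_findGreatest le_rfl (by simp))]

lemma stepPath_mem {S : Set X} (hS : ∀ i ≤ n, p i ∈ S) (t : ℝ) : stepPath p n t ∈ S :=
  hS _ (Nat.findGreatest_le n)

lemma dist_stepPath_le {ε : ℝ} (hε : 0 ≤ ε) (hsteps : ∀ i < n, dist (p i) (p (i + 1)) ≤ ε)
    {s t : ℝ} (hs : s ∈ Icc (0 : ℝ) 1) (ht : t ∈ Icc (0 : ℝ) 1) :
    dist (stepPath p n s) (stepPath p n t) ≤ chainLength p n * dist s t + ε := by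
  wlog hst : s ≤ t generalizing s t
  · rw [dist_comm, dist_comm s]
    exact this ht hs (le_of_not_ge hst)
  set ℓ := chainLength p n
  have hℓ : 0 ≤ ℓ := chainLength_nonneg p n
  set i := Nat.findGreatest (fun i => chainLength p i ≤ s * ℓ) n
  set j := Nat.findGreatest (fun i => chainLength p i ≤ t * ℓ) n
  have hi : chainLength p i ≤ s * ℓ := chainLength_findGreatest_le p n (mul_nonneg hs.1 hℓ)
  have hj : chainLength p j ≤ t * ℓ := chainLength_findGreatest_le p n (mul_nonneg ht.1 hℓ)
  have hij : i ≤ j :=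
    Nat.le_findGreatest (Nat.findGreatest_le n) (hi.trans (by gcongr))
  -- `i` is the last index whose arclength does not exceed `s ℓ`, so it is at most one step short
  have hi' : s * ℓ - ε ≤ chainLength p i := by
    rcases (Nat.findGreatest_le n : i ≤ n).lt_or_eq with hin | hin
    · have hnext : ¬ chainLength p (i + 1) ≤ s * ℓ :=
        Nat.findGreatest_is_greatest i.lt_succ_self hin
      rw [chainLength_succ] at hnext
      linarith [hsteps i hin]
    · change i = n at hin
      rw [hin]
      nlinarith [hs.2]
  show dist (p i) (p j) ≤ ℓ * dist s t + ε
  rw [Real.dist_eq, abs_of_nonpos (by linarith)]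
  linarith [dist_le_chainLength_sub p hij]

variable [ProperSpace X]

lemma exists_lipschitzOnWith_of_forall_approx {K : Set X} (hK : IsCompact K) {L : ℝ≥0}
    {x y : X} (h : ∀ ε > 0, ∃ γ : ℝ → X, γ 0 = x ∧ γ 1 = y ∧
      (∀ t ∈ Icc (0 : ℝ) 1, γ t ∈ cthickening ε K) ∧
      ∀ s ∈ Icc (0 : ℝ) 1, ∀ t ∈ Icc (0 : ℝ) 1, dist (γ s) (γ t) ≤ L * dist s t + ε) :
    ∃ γ : ℝ → X, γ 0 = x ∧ γ 1 = y ∧ MapsTo γ (Icc 0 1) K ∧ LipschitzOnWith L γ (Icc 0 1) := by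
  choose γ h0 h1 hγK hγ using fun k : ℕ => h (1 / (k + 1)) Nat.one_div_pos_of_nat
  have hε : Tendsto (fun k : ℕ => 1 / ((k : ℝ) + 1)) atTop (𝓝 0) :=
    tendsto_one_div_add_atTop_nhds_zero_nat
  -- Pointwise limits along an ultrafilter: every `γ k t` lies in the compact set `cthickening 1 K`.
  set U : Ultrafilter ℕ := Ultrafilter.of atTop
  have hU : (U : Filter ℕ) ≤ atTop := Ultrafilter.of_le _
  have hlim : ∀ t, ∃ z, t ∈ Icc (0 : ℝ) 1 → Tendsto (fun k => γ k t) U (𝓝 z) := by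
    intro t
    by_cases ht : t ∈ Icc (0 : ℝ) 1
    · obtain ⟨z, -, hz⟩ := (hK.cthickening (r := 1)).ultrafilter_le_nhds (U.map fun k => γ k t) (by
        rw [Ultrafilter.coe_map, le_principal_iff]
        refine mem_map.2 <| univ_mem' fun k => cthickening_mono ?_ K (hγK k t ht)
        rw [div_le_one (by positivity)]
        linarith [k.cast_nonneg (α := ℝ)])
      exact ⟨z, fun _ => hz⟩
    · exact ⟨x, fun h => absurd h ht⟩
  choose γ' hγ' using hlim
  have hend : ∀ t ∈ Icc (0 : ℝ) 1, ∀ z, (∀ k, γ k t = z) → γ' t = z := fun t ht z hz =>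
    tendsto_nhds_unique (hγ' t ht) (by simp only [hz]; exact tendsto_const_nhds)
  refine ⟨γ', hend 0 (left_mem_Icc.2 zero_le_one) x h0, hend 1 (right_mem_Icc.2 zero_le_one) y h1,
    fun t ht => ?_, LipschitzOnWith.of_dist_le_mul fun s hs t ht => ?_⟩
  · rw [← hK.isClosed.closure_eq, closure_eq_iInter_cthickening, mem_iInter₂]
    intro ε hε'
    refine isClosed_cthickening.mem_of_tendsto (hγ' t ht) ?_
    filter_upwards [(hε.eventually (gt_mem_nhds hε')).filter_mono hU] with k hk
    exact cthickening_mono hk.le K (hγK k t ht)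
  · have hbound : Tendsto (fun k : ℕ => L * dist s t + 1 / ((k : ℝ) + 1)) U
        (𝓝 (L * dist s t)) := by
      simpa using (hε.const_add (L * dist s t)).mono_left hU
    exact le_of_tendsto_of_tendsto' ((hγ' s hs).dist (hγ' t ht)) hbound fun k => hγ k s hs t ht

end Paths

section Rectifiable

variable {d : ℕ} {x y : EuclideanSpace ℝ (Fin d)}

lemma rectJoin_of_lipschitzOnWith {S : Set (EuclideanSpace ℝ (Fin d))}
    {γ : ℝ → EuclideanSpace ℝ (Fin d)} {L : ℝ≥0} (h0 : γ 0 = x) (h1 : γ 1 = y)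
    (hS : MapsTo γ (Icc 0 1) S) (hγ : LipschitzOnWith L γ (Icc 0 1)) : RectJoin S x y L := by
  refine ⟨γ, hγ.continuousOn, hS, h0, h1, ?_⟩
  have hid := (monotone_id.monotoneOn (Icc (0 : ℝ) 1)).eVariationOn_eq
    (left_mem_Icc.2 zero_le_one) (right_mem_Icc.2 zero_le_one)
  simp at hid
  simpa [hid] using hγ.comp_eVariationOn_le (mapsTo_id (Icc (0 : ℝ) 1))

lemma rectJoin_of_forall_isEpsChain {K : Set (EuclideanSpace ℝ (Fin d))} (hK : IsCompact K)
    {L : ℝ} (hL : 0 ≤ L) (h : ∀ δ > 0, ∃ n p, IsEpsChain (thickening δ K) δ x y n p ∧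
      chainLength p n ≤ L + δ) : RectJoin K x y L := by
  obtain ⟨γ, h0, h1, hK', hγ⟩ := exists_lipschitzOnWith_of_forall_approx hK (L := L.toNNReal)
    (x := x) (y := y) fun ε hε => by
      obtain ⟨n, p, ⟨hp0, hpn, hpS, hsteps⟩, hlen⟩ := h (ε / 2) (half_pos hε)
      refine ⟨stepPath p n, by rw [stepPath_zero, hp0], by rw [stepPath_one, hpn],
        fun t _ => thickening_subset_cthickening_of_le (by linarith) _ (stepPath_mem hpS t),
        fun s hs t ht => ?_⟩
      have hst := Real.dist_le_of_mem_Icc_01 hs ht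
      calc dist (stepPath p n s) (stepPath p n t) ≤ chainLength p n * dist s t + ε / 2 :=
            dist_stepPath_le (half_pos hε).le hsteps hs ht
        _ ≤ (L + ε / 2) * dist s t + ε / 2 := by gcongr
        _ ≤ L.toNNReal * dist s t + ε := by
            rw [Real.coe_toNNReal _ hL]
            nlinarith [dist_nonneg (x := s) (y := t)]
  simpa [Real.coe_toNNReal _ hL] using rectJoin_of_lipschitzOnWith h0 h1 hK' hγ

end Rectifiable

section WhitneyRegularity

variable {d : ℕ} {K : Set (EuclideanSpace ℝ (Fin d))} {x y : EuclideanSpace ℝ (Fin d)} {δ : ℝ}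

lemma exists_memC1_approx_chainDist (hK : IsPreconnected K) (hx : x ∈ K) (hδ : 0 < δ) {T : ℝ}
    (hT : 0 ≤ T) : ∃ f, MemC1 K f ∧ c1Norm K f ≤ T + δ / 8 + 1 ∧
      ∀ z ∈ K, |f z - min (chainDist (thickening δ K) δ x z) T| ≤ δ / 8 := by
  obtain ⟨f, hf, hfK⟩ := exists_contDiff_approx_of_lipschitzOnWith
    (locallyIntegrable_truncChainDist (μ := volume) hK hδ hx hT) (by positivity : 0 < δ / 4)
    fun z hz => lipschitzOnWith_truncChainDist hK hδ hx hz (by linarith)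
  have happrox : ∀ z ∈ K, |f z - truncChainDist K δ x T z| ≤ δ / 8 := fun z hz =>
    (hfK z hz).1.trans_eq (by push_cast; ring)
  refine ⟨f, memC1_of_contDiff hf, c1Norm_le_of_contDiff hf (by positivity) zero_le_one
    (fun z hz => ?_) (fun z hz => by simpa using (hfK z hz).2), fun z hz => ?_⟩
  · have h1 := happrox z hz
    have h2 := abs_truncChainDist_le (K := K) (δ := δ) (x := x) hT z
    rw [abs_le] at h1 h2 ⊢
    constructor <;> linarith
  · rw [← truncChainDist_of_mem (self_subset_thickening hδ K hz)]
    exact happrox z hz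

lemma chainDist_thickening_le_of_bound (hK : IsPreconnected K) (hx : x ∈ K) (hy : y ∈ K)
    {C : ℝ} (hC : 0 < C) (hCR : C * ‖y - x‖ < 1 / 2)
    (hbound : ∀ f, MemC1 K f → |f y - f x| ≤ C * c1Norm K f * ‖y - x‖) (hδ : 0 < δ) :
    chainDist (thickening δ K) δ x y ≤ 2 * C * ‖y - x‖ + 5 * δ / 8 := by
  set R := ‖y - x‖
  set c := chainDist (thickening δ K) δ x y
  set T := 2 * C * R + 5 * δ / 8 with hTdef
  have hR : 0 ≤ R := norm_nonneg _
  have hT : 0 < T := by positivity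
  obtain ⟨f, hf, hfc1, hfK⟩ := exists_memC1_approx_chainDist hK hx hδ hT.le
  have hfx := hfK x hx
  rw [chainDist_self (self_subset_thickening hδ K hx), min_eq_left hT.le] at hfx
  have hfy := hfK y hy
  have hxy : |f y - f x| ≤ C * (T + δ / 8 + 1) * R := (hbound f hf).trans (by gcongr)
  rw [abs_le] at hfx hfy hxy
  -- `T` is large enough for the bound below to force `min c T < T`
  have hlt : C * (T + δ / 8 + 1) * R + δ / 4 < T := by
    nlinarith [mul_lt_mul_of_pos_left hCR hT, mul_le_mul_of_nonneg_right hCR.le hδ.le, hTdef]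
  have hmin : min c T < T := by linarith
  exact (min_lt_iff.1 hmin).resolve_right (lt_irrefl T) |>.le

end WhitneyRegularity

theorem pointwiseWhitneyRegular_of_pointwise_bound {d : ℕ}
    (K : Set (EuclideanSpace ℝ (Fin d))) (hK : IsCompact K) (hconn : IsConnected K)
    (hbd : ∀ x ∈ K, ∃ C > (0:ℝ), ∀ f : EuclideanSpace ℝ (Fin d) → ℝ,
      MemC1 K f → ∀ y ∈ K, y ≠ x → |f y - f x| ≤ C * c1Norm K f * ‖y - x‖) :
    PointwiseWhitneyRegular K := by
  intro x hx
  obtain ⟨C, hC, hCf⟩ := hbd x hx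
  refine ⟨2 * C, by positivity, ball x (1 / (2 * C)), ball_mem_nhds x (by positivity), ?_⟩
  rintro y ⟨hyx, hy⟩
  have hCR : C * ‖y - x‖ < 1 / 2 := by
    rw [mem_ball, dist_eq_norm, lt_div_iff₀ (by positivity)] at hyx
    linarith
  have hbound : ∀ f, MemC1 K f → |f y - f x| ≤ C * c1Norm K f * ‖y - x‖ := fun f hf => by
    rcases eq_or_ne y x with rfl | hne
    · simp
    · exact hCf f hf y hy hne
  rw [norm_sub_rev]
  refine rectJoin_of_forall_isEpsChain hK (by positivity) fun δ hδ => ?_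
  obtain ⟨n, p, hp, hlen⟩ := exists_isEpsChain_lt_chainDist_add
    (exists_isEpsChain_thickening hconn.isPreconnected hδ hx (self_subset_thickening hδ K hy))
    (by positivity : 0 < 3 * δ / 8)
  have hdist := chainDist_thickening_le_of_bound hconn.isPreconnected hx hy hC hCR hbound hδ
  exact ⟨n, p, hp, by linarith⟩
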